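/- For every nonnegative integer n, p(7n+5) ≡ 0 (mod 7). -/

import Mathlib

/-
Over `𝔽₇`, the series `G = ∑ p(n) X^n` is the inverse of `P = ∏ (1 - X^i)`, so
`G = P^6 G^7`, and `G^7 = G(X^7)` only has exponents divisible by `7`. By Jacobi's identity
`P^3 = ∑ (-1)^k (2k+1) X^(k(k+1)/2)`, the terms of `P^6` have exponents
`k(k+1)/2 + l(l+1)/2`, and `8 (k(k+1)/2 + l(l+1)/2) + 2 = (2k+1)^2 + (2l+1)^2`. As `-1` is not
a square mod `7`, such an exponent `≡ 5 (mod 7)` forces `7 ∣ (2k+1)(2l+1)`. Hence the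
coefficient of `X^(7n+5)` in `P^6 G^7` vanishes.

Jacobi's identity is proved modulo `X^(n+1)`: differentiate the finite triple product
`∏_{j ≤ 2n} (q^n + q^j y)`, expanded by the `q`-binomial theorem, at `y = -1`, and use that
`(q;q)_c [a+b choose a]_q ≡ 1` modulo `q^(d+1)` for `d ≤ a, b, c`.
-/

/-- The partition function: `partition n` counts the partitions of `n`. -/
def partition (n : ℕ) : ℕ := Fintype.card (Nat.Partition n)

open PowerSeries Finset Filter
open scoped PowerSeries.WithPiTopology

theorem choose_two_succ (k : ℕ) : (k + 1).choose 2 = k.choose 2 + k := by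
  rw [Nat.choose_succ_succ', Nat.choose_one_right, add_comm]

section QBinom

variable {A : Type*} [CommRing A]

def qPochhammer (q : A) (n : ℕ) : A := ∏ i ∈ range n, (1 - q ^ (i + 1))

def qBinom (q : A) : ℕ → ℕ → A
  | _, 0 => 1
  | 0, _ + 1 => 0
  | n + 1, k + 1 => qBinom q n k + q ^ (k + 1) * qBinom q n (k + 1)

variable (q : A)

theorem qPochhammer_succ (n : ℕ) :
    qPochhammer q (n + 1) = qPochhammer q n * (1 - q ^ (n + 1)) :=
  prod_range_succ _ _

@[simp] theorem qBinom_zero_right (n : ℕ) : qBinom q n 0 = 1 := by cases n <;> rfl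

theorem qBinom_succ_succ (n k : ℕ) :
    qBinom q (n + 1) (k + 1) = qBinom q n k + q ^ (k + 1) * qBinom q n (k + 1) := rfl

theorem qBinom_eq_zero_of_lt {n k : ℕ} (h : n < k) : qBinom q n k = 0 := by
  induction n generalizing k with
  | zero => obtain ⟨k, rfl⟩ := Nat.exists_eq_succ_of_ne_zero h.ne'; rfl
  | succ n ih =>
    obtain ⟨k, rfl⟩ := Nat.exists_eq_succ_of_ne_zero (Nat.ne_zero_of_lt h)
    rw [qBinom_succ_succ, ih (by omega), ih (by omega), mul_zero, add_zero]

@[simp] theorem qBinom_self (n : ℕ) : qBinom q n n = 1 := by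
  induction n with
  | zero => rfl
  | succ n ih =>
    rw [qBinom_succ_succ, ih, qBinom_eq_zero_of_lt q n.lt_succ_self, mul_zero, add_zero]

theorem map_qBinom {B : Type*} [CommRing B] (φ : A →+* B) (n k : ℕ) :
    φ (qBinom q n k) = qBinom (φ q) n k := by
  induction n generalizing k with
  | zero => cases k <;> simp [qBinom]
  | succ n ih => cases k <;> simp [qBinom_succ_succ, ih]

theorem qPochhammer_mul_qPochhammer_mul_qBinom (k l : ℕ) :
    qPochhammer q k * qPochhammer q l * qBinom q (k + l) k = qPochhammer q (k + l) := by
  induction k generalizing l with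
  | zero => simp [qPochhammer]
  | succ k ihk =>
    induction l with
    | zero => simp [qPochhammer]
    | succ l ihl =>
      have hk := ihk (l + 1)
      rw [show k + (l + 1) = k + l + 1 by omega, qPochhammer_succ q l] at hk
      rw [show k + 1 + l = k + l + 1 by omega, qPochhammer_succ q k] at ihl
      rw [show k + 1 + (l + 1) = k + l + 1 + 1 by omega, qBinom_succ_succ,
        qPochhammer_succ q (k + l + 1), qPochhammer_succ q k, qPochhammer_succ q l]
      linear_combination (1 - q ^ (k + 1)) * hk + q ^ (k + 1) * (1 - q ^ (l + 1)) * ihl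

theorem pow_succ_dvd_qPochhammer_sub {c d : ℕ} (h : d ≤ c) :
    q ^ (d + 1) ∣ qPochhammer q c - qPochhammer q d := by
  induction c, h using Nat.le_induction with
  | base => simp
  | succ c hdc ih =>
    rw [qPochhammer_succ, show qPochhammer q c * (1 - q ^ (c + 1)) - qPochhammer q d =
      (qPochhammer q c - qPochhammer q d) - q ^ (c + 1) * qPochhammer q c by ring]
    exact dvd_sub ih ((pow_dvd_pow q (by omega)).mul_right _)

theorem prod_pow_sub_pow (n : ℕ) :
    ∏ j ∈ range n, (q ^ n - q ^ j) = (-1) ^ n * q ^ n.choose 2 * qPochhammer q n := by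
  have h : ∀ j ∈ range n, q ^ n - q ^ j = -q ^ j * (1 - q ^ (n - 1 - j + 1)) := by
    intro j hj
    have hj := mem_range.1 hj
    have hn : q ^ n = q ^ j * q ^ (n - j) := by rw [← pow_add, Nat.add_sub_cancel' hj.le]
    rw [show n - 1 - j + 1 = n - j by omega, hn]
    ring
  rw [prod_congr rfl h, prod_mul_distrib, prod_range_reflect (fun j => 1 - q ^ (j + 1)),
    prod_neg, prod_pow_eq_pow_sum, sum_range_id, ← Nat.choose_two_right, card_range, qPochhammer]

/-- The `q`-binomial theorem, in homogeneous form. -/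
theorem prod_add_pow_mul (a y : A) (n : ℕ) :
    ∏ j ∈ range n, (a + q ^ j * y) =
      ∑ k ∈ range (n + 1), q ^ k.choose 2 * qBinom q n k * a ^ (n - k) * y ^ k := by
  induction n generalizing y with
  | zero => simp
  | succ n ih =>
    have hprod : ∏ j ∈ range (n + 1), (a + q ^ j * y) =
        (a + y) * ∏ j ∈ range n, (a + q ^ j * (q * y)) := by
      rw [prod_range_succ', pow_zero, one_mul, mul_comm]
      simp_rw [pow_succ, mul_assoc]
    rw [hprod, ih, add_mul, mul_sum, mul_sum, sum_range_succ' _ (n + 1),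
      sum_range_succ' (fun k => a * _)]
    simp_rw [qBinom_succ_succ, Nat.add_sub_add_right, mul_add, add_mul, sum_add_distrib]
    rw [sum_range_succ (fun k => _ * (q ^ (k + 1) * qBinom q n (k + 1)) * _ * _),
      qBinom_eq_zero_of_lt q n.lt_succ_self]
    simp only [choose_two_succ, mul_zero, zero_mul, add_zero, Nat.choose_zero_succ, pow_zero,
      qBinom_zero_right]
    have h₁ : ∀ k ∈ range n,
        a * (q ^ (k.choose 2 + k) * qBinom q n (k + 1) * a ^ (n - (k + 1)) * (q * y) ^ (k + 1)) =
          q ^ (k.choose 2 + k) * (q ^ (k + 1) * qBinom q n (k + 1)) * a ^ (n - k) * y ^ (k + 1) :=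
      fun k hk => by rw [show n - k = n - (k + 1) + 1 by have := mem_range.1 hk; omega]; ring
    have h₂ : ∀ k ∈ range (n + 1),
        y * (q ^ k.choose 2 * qBinom q n k * a ^ (n - k) * (q * y) ^ k) =
          q ^ (k.choose 2 + k) * qBinom q n k * a ^ (n - k) * y ^ (k + 1) :=
      fun k _ => by ring
    rw [sum_congr rfl h₁, sum_congr rfl h₂, Nat.sub_zero, Nat.sub_zero]
    ring

end QBinom

theorem eval_neg_one_derivative_sum {S : Type*} [CommRing S] (c : ℕ → S) (N : ℕ) :
    (Polynomial.derivative (∑ m ∈ range N, Polynomial.C (c m) * Polynomial.X ^ m)).eval (-1) =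
      ∑ m ∈ range N, (-1) ^ (m + 1) * (m : S) * c m := by
  simp only [Polynomial.derivative_sum, Polynomial.derivative_C_mul_X_pow,
    Polynomial.eval_finsetSum, Polynomial.eval_mul, Polynomial.eval_C, Polynomial.eval_pow,
    Polynomial.eval_X]
  refine sum_congr rfl fun m _ => ?_
  cases m with
  | zero => simp
  | succ m => rw [Nat.add_sub_cancel, pow_succ (-1 : S) (m + 1), pow_succ]; ring

theorem sum_range_two_mul_add_two_eq_sum_pairs {M : Type*} [AddCommMonoid M] (g : ℕ → M)
    (n : ℕ) :
    ∑ m ∈ range (2 * n + 2), g m = ∑ k ∈ range (n + 1), (g (n - k) + g (n + 1 + k)) := by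
  rw [show 2 * n + 2 = (n + 1) + (n + 1) by ring, sum_range_add, sum_add_distrib,
    ← sum_range_reflect g (n + 1)]
  simp only [Nat.add_sub_cancel]

theorem choose_two_add_mul_eq_of_le {n k : ℕ} (hk : k ≤ n) :
    (n - k).choose 2 + n * (2 * n + 1 - (n - k)) =
        (n + 1).choose 2 + n * n + (k + 1).choose 2 ∧
      (n + 1 + k).choose 2 + n * (2 * n + 1 - (n + 1 + k)) =
        (n + 1).choose 2 + n * n + (k + 1).choose 2 := by
  obtain ⟨j, rfl⟩ := Nat.exists_eq_add_of_le hk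
  rw [show k + j - k = j by omega, show 2 * (k + j) + 1 - j = 2 * k + j + 1 by omega,
    show 2 * (k + j) + 1 - (k + j + 1 + k) = j by omega]
  constructor <;> apply Nat.cast_injective (R := ℚ) <;> push_cast [Nat.cast_choose_two] <;> ring

section Jacobi

variable {R : Type*} [CommRing R]

/-- The finite triple product `∏_{j ≤ 2n} (q^n + q^j y)`, differentiated in `y` at `y = -1`. -/
theorem qPochhammer_sq_eq_sum (n : ℕ) :
    (-1) ^ n * X ^ ((n + 1).choose 2 + n * n) * qPochhammer (X : R⟦X⟧) n ^ 2 =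
      ∑ m ∈ range (2 * n + 2), (-1) ^ (m + 1) * (m : R⟦X⟧) *
        (X ^ (m.choose 2 + n * (2 * n + 1 - m)) * qBinom X (2 * n + 1) m) := by
  have hexp := prod_add_pow_mul (Polynomial.C (X : R⟦X⟧)) (Polynomial.C (X ^ n)) Polynomial.X
    (2 * n + 1)
  have hterm : ∀ m ∈ range (2 * n + 1 + 1),
      Polynomial.C (X ^ (m.choose 2 + n * (2 * n + 1 - m)) * qBinom X (2 * n + 1) m) *
          Polynomial.X ^ m =
        Polynomial.C (X : R⟦X⟧) ^ m.choose 2 * qBinom (Polynomial.C X) (2 * n + 1) m *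
          Polynomial.C (X ^ n) ^ (2 * n + 1 - m) * Polynomial.X ^ m :=
    fun m _ => by simp only [map_mul, map_pow, map_qBinom, pow_add, pow_mul]; ring
  rw [← eval_neg_one_derivative_sum, sum_congr rfl hterm, ← hexp]
  -- isolate the factor `j = n`, which is `C (X ^ n) * (1 + y)`
  rw [show 2 * n + 1 = n + 1 + n by ring, prod_range_add, prod_range_succ, ← map_pow,
    show Polynomial.C (X ^ n) + Polynomial.C (X ^ n) * Polynomial.X =
      (1 + Polynomial.X) * Polynomial.C (X ^ n : R⟦X⟧) by ring,
    show ∀ a b c d : Polynomial R⟦X⟧, a * (b * c) * d = b * (c * a * d) from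
      fun _ _ _ _ => by ring,
    Polynomial.derivative_mul]
  simp only [Polynomial.eval_add, Polynomial.eval_mul, Polynomial.eval_one, Polynomial.eval_X,
    Polynomial.derivative_add, Polynomial.derivative_one, Polynomial.derivative_X,
    Polynomial.eval_C, Polynomial.eval_prod, Polynomial.eval_pow, add_neg_cancel, zero_mul,
    add_zero, zero_add, one_mul, mul_neg_one]
  have htail : ∀ i ∈ range n,
      (X : R⟦X⟧) ^ n - X ^ (n + 1 + i) = X ^ n * (1 - X ^ (i + 1)) := fun i _ => by ring
  simp_rw [← sub_eq_add_neg, prod_pow_sub_pow]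
  rw [prod_congr rfl htail, prod_mul_distrib, prod_const, card_range, ← qPochhammer,
    choose_two_succ]
  ring

theorem isUnit_qPochhammer_X (n : ℕ) : IsUnit (qPochhammer (X : R⟦X⟧) n) := by
  rw [isUnit_iff_constantCoeff]
  simp [qPochhammer, map_prod]

theorem X_pow_dvd_qPochhammer_mul_qBinom_sub_one {a b c d : ℕ} (ha : d ≤ a) (hb : d ≤ b)
    (hc : d ≤ c) : (X : R⟦X⟧) ^ (d + 1) ∣ qPochhammer X c * qBinom X (a + b) a - 1 := by
  rw [← ((isUnit_qPochhammer_X a).mul (isUnit_qPochhammer_X b)).dvd_mul_right,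
    show (qPochhammer X c * qBinom X (a + b) a - 1) * (qPochhammer X a * qPochhammer X b) =
      (qPochhammer X c - qPochhammer X d) * qPochhammer (X : R⟦X⟧) (a + b) +
        qPochhammer X d * (qPochhammer X (a + b) - qPochhammer X d) -
        (qPochhammer X a - qPochhammer X d) * qPochhammer X b -
        qPochhammer X d * (qPochhammer X b - qPochhammer X d) by
      rw [← qPochhammer_mul_qPochhammer_mul_qBinom X a b]; ring]
  have hd {e : ℕ} (he : d ≤ e) := pow_succ_dvd_qPochhammer_sub (X : R⟦X⟧) he
  exact dvd_sub (dvd_sub (dvd_add ((hd hc).mul_right _) ((hd (by omega)).mul_left _))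
    ((hd ha).mul_right _)) ((hd hb).mul_left _)

theorem X_pow_dvd_of_X_pow_add_dvd_X_pow_mul {c m : ℕ} {φ : R⟦X⟧}
    (h : X ^ (c + m) ∣ X ^ c * φ) : X ^ m ∣ φ := by
  obtain ⟨ψ, hψ⟩ := h
  exact ⟨ψ, X_pow_mul_injective (k := c) (by dsimp only; rw [hψ, pow_add, mul_assoc])⟩

/-- Jacobi's identity `∏ (1 - X^i)^3 = ∑ (-1)^k (2k+1) X^(k(k+1)/2)`, modulo `X^(n+1)`. -/
theorem X_pow_dvd_qPochhammer_pow_three_sub (n : ℕ) :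
    (X : R⟦X⟧) ^ (n + 1) ∣ qPochhammer X n ^ 3 -
      ∑ k ∈ range (n + 1), (-1) ^ k * (2 * k + 1 : R⟦X⟧) * X ^ (k + 1).choose 2 := by
  set c := (n + 1).choose 2 + n * n
  refine (isUnit_neg_one.pow n).dvd_mul_left.1 (X_pow_dvd_of_X_pow_add_dvd_X_pow_mul (c := c) ?_)
  rw [mul_sub, mul_sub, show X ^ c * ((-1) ^ n * qPochhammer (X : R⟦X⟧) n ^ 3) =
    qPochhammer X n * ((-1) ^ n * X ^ c * qPochhammer X n ^ 2) by ring, qPochhammer_sq_eq_sum,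
    mul_sum, sum_range_two_mul_add_two_eq_sum_pairs, mul_sum, mul_sum, ← sum_sub_distrib]
  -- the terms `m = n - k` and `m = n + 1 + k` both carry `X ^ (c + (k + 1).choose 2)`
  refine dvd_sum fun k hk => ?_
  obtain ⟨j, rfl⟩ := Nat.exists_eq_add_of_le (Nat.lt_succ_iff.1 (mem_range.1 hk))
  obtain ⟨e₁, e₂⟩ := choose_two_add_mul_eq_of_le (Nat.le_add_right k j)
  simp only [Nat.add_sub_cancel_left] at e₁ e₂ ⊢
  obtain ⟨v₁, hv₁⟩ :
      X ^ (j + 1) ∣ qPochhammer (X : R⟦X⟧) (k + j) * qBinom X (2 * (k + j) + 1) j - 1 := by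
    rw [show 2 * (k + j) + 1 = j + (k + j + 1 + k) by omega]
    exact X_pow_dvd_qPochhammer_mul_qBinom_sub_one le_rfl (by omega) (by omega)
  obtain ⟨v₂, hv₂⟩ : X ^ (j + 1) ∣
      qPochhammer (X : R⟦X⟧) (k + j) * qBinom X (2 * (k + j) + 1) (k + j + 1 + k) - 1 := by
    rw [show 2 * (k + j) + 1 = (k + j + 1 + k) + j by omega]
    exact X_pow_dvd_qPochhammer_mul_qBinom_sub_one (by omega) le_rfl (by omega)
  have hs₁ : (-1 : R⟦X⟧) ^ (k + j + 1 + k + 1) = (-1) ^ j := by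
    rw [show k + j + 1 + k + 1 = j + 2 * (k + 1) by ring, pow_add, pow_mul]; simp
  have hs₂ : (-1 : R⟦X⟧) ^ (k + j) * (-1) ^ k = (-1) ^ j := by
    rw [← pow_add, show k + j + k = j + 2 * k by ring, pow_add, pow_mul]; simp
  rw [e₁, e₂, choose_two_succ k, hs₁]
  refine ⟨X ^ k.choose 2 * ((-1) ^ (j + 1) * (j : R⟦X⟧) * v₁ +
    (-1) ^ j * (2 * k + j + 1 : R⟦X⟧) * v₂), ?_⟩
  push_cast
  linear_combination ((-1) ^ (j + 1) * (j : R⟦X⟧) * X ^ (c + (k.choose 2 + k))) * hv₁ +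
    ((-1) ^ j * (2 * k + j + 1 : R⟦X⟧) * X ^ (c + (k.choose 2 + k))) * hv₂ -
    (2 * k + 1) * X ^ (c + (k.choose 2 + k)) * hs₂

end Jacobi

theorem eventually_coeff_eq_partition (R : Type*) [CommRing R] (d : ℕ) :
    ∀ᶠ M in atTop, ∀ G : R⟦X⟧, qPochhammer X M * G = 1 → coeff d G = partition d := by
  -- with the discrete topology on `R`, each coefficient of the partial products stabilises
  let _ : TopologicalSpace R := ⊥
  have _ : DiscreteTopology R := ⟨rfl⟩
  have hprod := Nat.Partition.hasProd_powerSeriesMk_card_restricted R (fun _ => True)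
  simp only [if_true] at hprod
  have hcoeff :=
    ((WithPiTopology.tendsto_iff_coeff_tendsto _ _ _ _).1 hprod d).comp tendsto_finset_range
  rw [nhds_discrete, tendsto_pure] at hcoeff
  filter_upwards [hcoeff] with M hM G hG
  have hinv : qPochhammer X M * ∏ i ∈ range M, ∑' j, (X : R⟦X⟧) ^ ((i + 1) * j) = 1 := by
    rw [qPochhammer, ← prod_mul_distrib]
    refine prod_eq_one fun i _ => ?_
    simp_rw [pow_mul]
    exact WithPiTopology.one_sub_mul_tsum_pow_of_constantCoeff_eq_zero (by simp)
  have hG' : G = ∏ i ∈ range M, ∑' j, (X : R⟦X⟧) ^ ((i + 1) * j) := by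
    rw [← one_mul G, ← hinv, mul_comm (qPochhammer X M), mul_assoc, hG, mul_one]
  simp only [Function.comp_apply, coeff_mk] at hM
  rw [hG', hM, partition, Nat.Partition.restricted]
  simp

theorem coeff_pow_char_eq_zero_of_not_dvd {R : Type*} [CommRing R] (p : ℕ) [hp : Fact p.Prime]
    [CharP R p] (φ : R⟦X⟧) {n : ℕ} (hn : ¬ p ∣ n) : coeff n (φ ^ p) = 0 := by
  rw [← MvPowerSeries.map_frobenius_expand p hp.out.ne_zero]
  change frobenius R p (coeff n (expand p hp.out.ne_zero φ)) = 0
  rw [coeff_expand_of_not_dvd _ _ _ hn, map_zero]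

theorem mul_eq_zero_of_choose_two_add_choose_two {k l : ℕ}
    (h : (k + 1).choose 2 + (l + 1).choose 2 ≡ 5 [MOD 7]) :
    ((2 * k + 1) * (2 * l + 1) : ZMod 7) = 0 := by
  have hsq : ∀ a b : ZMod 7, a ^ 2 + b ^ 2 = 0 → a * b = 0 := by decide
  have h8 : (2 * k + 1) ^ 2 + (2 * l + 1) ^ 2 = 8 * ((k + 1).choose 2 + (l + 1).choose 2) + 2 := by
    apply Nat.cast_injective (R := ℚ); push_cast [Nat.cast_choose_two]; ring
  have h5 := (ZMod.natCast_eq_natCast_iff _ _ _).2 h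
  have h8' := congrArg (Nat.cast : ℕ → ZMod 7) h8
  push_cast at h8' h5
  apply hsq
  rw [h8', h5]
  decide

theorem coeff_qPochhammer_pow_six_eq_zero {i n : ℕ} (hi : i ≤ n) (h5 : i ≡ 5 [MOD 7]) :
    coeff i (qPochhammer (X : (ZMod 7)⟦X⟧) n ^ 6) = 0 := by
  set J := ∑ k ∈ range (n + 1), (-1) ^ k * (2 * k + 1 : (ZMod 7)⟦X⟧) * X ^ (k + 1).choose 2
  have hJ : X ^ (n + 1) ∣ qPochhammer X n ^ 6 - J ^ 2 := by
    rw [show qPochhammer (X : (ZMod 7)⟦X⟧) n ^ 6 - J ^ 2 =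
      (qPochhammer X n ^ 3 - J) * (qPochhammer X n ^ 3 + J) by ring]
    exact (X_pow_dvd_qPochhammer_pow_three_sub n).mul_right _
  have hcoeff : coeff i (qPochhammer X n ^ 6) = coeff i (J ^ 2) :=
    sub_eq_zero.1 (by rw [← map_sub]; exact X_pow_dvd_iff.1 hJ i (by omega))
  rw [hcoeff, sq, sum_mul_sum, map_sum]
  refine sum_eq_zero fun k _ => ?_
  rw [map_sum]
  refine sum_eq_zero fun l _ => ?_
  have hterm : (-1) ^ k * (2 * k + 1 : (ZMod 7)⟦X⟧) * X ^ (k + 1).choose 2 *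
      ((-1) ^ l * (2 * l + 1 : (ZMod 7)⟦X⟧) * X ^ (l + 1).choose 2) =
      C ((-1) ^ (k + l) * ((2 * k + 1) * (2 * l + 1) : ZMod 7)) *
        X ^ ((k + 1).choose 2 + (l + 1).choose 2) := by
    simp only [map_mul, map_pow, map_neg, map_one, map_add, map_natCast, map_ofNat]; ring
  rw [hterm, coeff_C_mul_X_pow]
  split_ifs with h
  · rw [mul_eq_zero_of_choose_two_add_choose_two (h ▸ h5), mul_zero]
  · rfl

/-- Ramanujan's congruence modulo 7. -/
theorem ramanujan_congruence_seven (n : ℕ) : partition (7 * n + 5) ≡ 0 [MOD 7] := by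
  have : Fact (Nat.Prime 7) := ⟨by norm_num⟩
  obtain ⟨M, hcoeff, hM⟩ := ((eventually_coeff_eq_partition (ZMod 7) (7 * n + 5)).and
    (eventually_ge_atTop (7 * n + 5))).exists
  obtain ⟨G, hG⟩ := (isUnit_qPochhammer_X (R := ZMod 7) M).exists_right_inv
  have hG7 : G = qPochhammer X M ^ 6 * G ^ 7 :=
    calc G = (qPochhammer X M * G) ^ 6 * G := by rw [hG, one_pow, one_mul]
      _ = qPochhammer X M ^ 6 * G ^ 7 := by ring
  rw [← ZMod.natCast_eq_natCast_iff, Nat.cast_zero, ← hcoeff G hG, hG7, coeff_mul]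
  refine sum_eq_zero fun ⟨i, j⟩ hij => ?_
  rw [HasAntidiagonal.mem_antidiagonal] at hij
  by_cases h7 : 7 ∣ j
  · rw [coeff_qPochhammer_pow_six_eq_zero (by omega) (by unfold Nat.ModEq; omega), zero_mul]
  · rw [coeff_pow_char_eq_zero_of_not_dvd 7 G h7, mul_zero]
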